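/- Let L : ℝ^d → ℝ be differentiable with an L-Lipschitz gradient, lower-bounded by L*. For gradient descent Θ_{t+1} = Θ_t - η ∇L(Θ_t) with step size η ≤ 1/L, the iterates satisfy min_{t=0,...,T-1} ‖∇L(Θ_t)‖² ≤ 2(L(Θ_0) - L*)/(η T). -/

import Mathlib

/-!
A gradient step of size `η ≤ 1/Lc` decreases `L` by at least `η/2 ‖∇L‖²`, by the descent lemma
`L (x + v) ≤ L x + ⟪∇L x, v⟫ + Lc/2 ‖v‖²`. Summing over `T` steps telescopes to
`η/2 ∑ ‖∇L(Θ_t)‖² ≤ L(Θ_0) - L(Θ_T) ≤ L(Θ_0) - L*`, and the minimum is at most the average.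
-/

open Finset NNReal Set
open scoped InnerProductSpace

section GradientDescent

variable {E : Type*} [NormedAddCommGroup E] [InnerProductSpace ℝ E] [CompleteSpace E]
  {f : E → ℝ}

theorem HasGradientAt.hasDerivAt_comp_add_smul {g x v : E} {s : ℝ}
    (hf : HasGradientAt f g (x + s • v)) :
    HasDerivAt (fun s : ℝ => f (x + s • v)) (⟪g, v⟫_ℝ) s := by
  have hline : HasDerivAt (fun s : ℝ => x + s • v) v s := by
    simpa using ((hasDerivAt_id s).smul_const v).const_add x
  exact hf.hasFDerivAt.comp_hasDerivAt s hline

theorem apply_add_le_of_lipschitzWith_gradient (hf : Differentiable ℝ f)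
    {K : ℝ≥0} (hK : LipschitzWith K (gradient f)) (x v : E) :
    f (x + v) ≤ f x + ⟪gradient f x, v⟫_ℝ + K / 2 * ‖v‖ ^ 2 := by
  have hφ (s : ℝ) : HasDerivAt (fun s : ℝ => f (x + s • v)) (⟪gradient f (x + s • v), v⟫_ℝ) s :=
    (hf _).hasGradientAt.hasDerivAt_comp_add_smul
  have hψ (s : ℝ) :
      HasDerivAt (fun s : ℝ => f x + s * ⟪gradient f x, v⟫_ℝ + K / 2 * s ^ 2 * ‖v‖ ^ 2)
        (⟪gradient f x, v⟫_ℝ + K * s * ‖v‖ ^ 2) s :=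
    ((((hasDerivAt_id' s).mul_const _).const_add (f x)).add
      (((hasDerivAt_pow 2 s).const_mul (K / 2 : ℝ)).mul_const (‖v‖ ^ 2))).congr_deriv (by ring)
  have hslope (s : ℝ) (hs : s ∈ Ico (0 : ℝ) 1) :
      ⟪gradient f (x + s • v), v⟫_ℝ ≤ ⟪gradient f x, v⟫_ℝ + K * s * ‖v‖ ^ 2 := by
    have hdist : ‖gradient f (x + s • v) - gradient f x‖ ≤ K * (s * ‖v‖) := by
      simpa [← dist_eq_norm, norm_smul, abs_of_nonneg hs.1] using hK.dist_le_mul (x + s • v) x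
    calc ⟪gradient f (x + s • v), v⟫_ℝ
        = ⟪gradient f x, v⟫_ℝ + ⟪gradient f (x + s • v) - gradient f x, v⟫_ℝ := by
          rw [inner_sub_left]; ring
      _ ≤ ⟪gradient f x, v⟫_ℝ + ‖gradient f (x + s • v) - gradient f x‖ * ‖v‖ := by
          gcongr; exact real_inner_le_norm _ _
      _ ≤ ⟪gradient f x, v⟫_ℝ + K * s * ‖v‖ ^ 2 := by
          nlinarith [mul_le_mul_of_nonneg_right hdist (norm_nonneg v)]
  -- `s ↦ f (x + s • v)` equals its quadratic majorant at `0` and grows no faster on `[0, 1]`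
  have := image_le_of_deriv_right_le_deriv_boundary
    (fun s _ => (hφ s).continuousAt.continuousWithinAt) (fun s _ => (hφ s).hasDerivWithinAt)
    (by simp) (fun s _ => (hψ s).continuousAt.continuousWithinAt)
    (fun s _ => (hψ s).hasDerivWithinAt) hslope (right_mem_Icc.mpr zero_le_one)
  simpa using this

theorem apply_sub_smul_gradient_le (hf : Differentiable ℝ f) {K : ℝ≥0}
    (hK : LipschitzWith K (gradient f)) {η : ℝ} (hη : 0 ≤ η) (hηK : η * K ≤ 1) (x : E) :
    f (x - η • gradient f x) ≤ f x - η / 2 * ‖gradient f x‖ ^ 2 := by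
  have h := apply_add_le_of_lipschitzWith_gradient hf hK x (-(η • gradient f x))
  rw [← sub_eq_add_neg, inner_neg_right, real_inner_smul_right, real_inner_self_eq_norm_sq,
    norm_neg, norm_smul, Real.norm_of_nonneg hη] at h
  nlinarith [sq_nonneg ‖gradient f x‖, mul_le_mul_of_nonneg_left hηK hη]

theorem sum_sq_norm_gradient_le_of_gradient_descent (hf : Differentiable ℝ f) {K : ℝ≥0}
    (hK : LipschitzWith K (gradient f)) {η : ℝ} (hη : 0 ≤ η) (hηK : η * K ≤ 1) {Θ : ℕ → E}
    (hstep : ∀ t, Θ (t + 1) = Θ t - η • gradient f (Θ t)) (T : ℕ) :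
    η / 2 * ∑ t ∈ range T, ‖gradient f (Θ t)‖ ^ 2 ≤ f (Θ 0) - f (Θ T) := by
  rw [mul_sum, ← sum_range_sub' (fun t => f (Θ t))]
  refine sum_le_sum fun t _ => ?_
  have := apply_sub_smul_gradient_le hf hK hη hηK (Θ t)
  rw [← hstep] at this
  linarith

end GradientDescent

theorem gradient_descent_convergence_general (d : ℕ)
    (L : EuclideanSpace ℝ (Fin d) → ℝ) (hdiff : Differentiable ℝ L)
    (Lc : ℝ)
    (hlip : ∀ x y, ‖gradient L x - gradient L y‖ ≤ Lc * ‖x - y‖)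
    (Lstar : ℝ) (hlb : ∀ x, Lstar ≤ L x)
    (η : ℝ) (hη : 0 < η) (hηL : η ≤ 1 / Lc)
    (Θ : ℕ → EuclideanSpace ℝ (Fin d))
    (hstep : ∀ t, Θ (t + 1) = Θ t - η • gradient L (Θ t))
    (T : ℕ) (hT : 0 < T) :
    (Finset.range T).inf' (Finset.nonempty_range_iff.mpr (Nat.pos_iff_ne_zero.mp hT))
        (fun t => ‖gradient L (Θ t)‖ ^ 2)
      ≤ 2 * (L (Θ 0) - Lstar) / (η * T) := by
  have hLc : 0 < Lc := one_div_pos.mp (hη.trans_le hηL)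
  have hK : LipschitzWith Lc.toNNReal (gradient L) := .of_dist_le_mul fun x y => by
    simpa [dist_eq_norm, Real.coe_toNNReal _ hLc.le] using hlip x y
  have hηK : η * Lc.toNNReal ≤ 1 := by
    rw [Real.coe_toNNReal _ hLc.le]
    exact (le_div_iff₀ hLc).mp hηL
  have hdescent := sum_sq_norm_gradient_le_of_gradient_descent hdiff hK hη.le hηK hstep T
  set g : ℕ → ℝ := fun t => ‖gradient L (Θ t)‖ ^ 2
  have hmin := card_nsmul_le_sum (range T) g ((range T).inf' (nonempty_range_iff.mpr hT.ne') g)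
    fun t ht => inf'_le g ht
  rw [card_range, nsmul_eq_mul] at hmin
  rw [le_div_iff₀ (by positivity)]
  nlinarith [hlb (Θ T)]

/-- Convergence of gradient descent: if `L` is differentiable with `Lc`-Lipschitz
gradient and lower bound `Lstar`, and `Θ_{t+1} = Θ_t - η ∇L(Θ_t)` with `0 < η ≤ 1/Lc`,
then `min_{t<T} ‖∇L(Θ_t)‖² ≤ 2(L(Θ_0) - Lstar)/(η T)`. -/
theorem gradient_descent_convergence (d : ℕ)
    (L : EuclideanSpace ℝ (Fin d) → ℝ) (hdiff : Differentiable ℝ L)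
    (Lc : ℝ) (hLc : 0 < Lc)
    (hlip : ∀ x y, ‖gradient L x - gradient L y‖ ≤ Lc * ‖x - y‖)
    (Lstar : ℝ) (hlb : ∀ x, Lstar ≤ L x)
    (η : ℝ) (hη : 0 < η) (hηL : η ≤ 1 / Lc)
    (Θ : ℕ → EuclideanSpace ℝ (Fin d))
    (hstep : ∀ t, Θ (t + 1) = Θ t - η • gradient L (Θ t))
    (T : ℕ) (hT : 0 < T) :
    (Finset.range T).inf' (Finset.nonempty_range_iff.mpr (Nat.pos_iff_ne_zero.mp hT))
        (fun t => ‖gradient L (Θ t)‖ ^ 2)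
      ≤ 2 * (L (Θ 0) - Lstar) / (η * T) :=
  gradient_descent_convergence_general d L hdiff Lc hlip Lstar hlb η hη hηL Θ hstep T hT
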